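/- arXiv:1910.12683 — 3 statements merged into one kernel-verified Lean document; each statement's English description precedes it below -/
import Mathlib

section
/- If a finite group G is relative almost monomial with respect to a normal subgroup N ⊴ G, then the quotient group G/N is almost monomial. -/
open scoped Classical

noncomputable section

/-- The inner product of two class functions on a finite group. -/
def cdot (G : Type*) [Group G] [Finite G] (f h : G → ℂ) : ℂ :=
  (Nat.card G : ℂ)⁻¹ * ∑ᶠ g : G, f g * (starRingEnd ℂ) (h g)

/-- `f` is the character of a finite-dimensional complex representation of `G`. -/
def IsChar (G : Type*) [Group G] (f : G → ℂ) : Prop :=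
  ∃ (n : ℕ) (ρ : G →* Matrix.GeneralLinearGroup (Fin n) ℂ),
    f = fun g => Matrix.trace ((ρ g : Matrix (Fin n) (Fin n) ℂ))

/-- `f` is a linear (degree one) character of `G`. -/
def IsLinearChar (G : Type*) [Group G] (f : G → ℂ) : Prop :=
  ∃ ρ : G →* ℂˣ, f = fun g => (ρ g : ℂ)

/-- `f` is an irreducible character of `G`: a character of norm one. -/
def IsIrrChar (G : Type*) [Group G] [Finite G] (f : G → ℂ) : Prop :=
  IsChar G f ∧ cdot G f f = 1

/-- The class function on `G` induced from a class function on a subgroup `H`. -/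
def ind {G : Type*} [Group G] [Finite G] (H : Subgroup G) (f : H → ℂ) : G → ℂ :=
  fun g => (Nat.card H : ℂ)⁻¹ *
    ∑ᶠ x : G, if h : x * g * x⁻¹ ∈ H then f ⟨x * g * x⁻¹, h⟩ else 0

/-- Restriction of a class function on `G` to a subgroup `H`. -/
def res {G : Type*} [Group G] (H : Subgroup G) (f : G → ℂ) : H → ℂ := fun x => f x

/-- Restriction of a class function on a subgroup `K` to a smaller subgroup `H ≤ K`. -/
def resTo {G : Type*} [Group G] {K H : Subgroup G} (hHK : H ≤ K) (f : K → ℂ) : H → ℂ :=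
  fun x => f ⟨x.1, hHK x.2⟩

/-- Induction of a class function from a subgroup `H` to a larger subgroup `K`. -/
def indTo {G : Type*} [Group G] [Finite G] (K H : Subgroup G) (f : H → ℂ) : K → ℂ :=
  ind (H.subgroupOf K) fun y => f ⟨y.1.1, Subgroup.mem_subgroupOf.mp y.2⟩

/-- `G` is almost monomial. -/
def IsAlmostMonomial (G : Type*) [Group G] [Finite G] : Prop :=
  ∀ χ φ : G → ℂ, IsIrrChar G χ → IsIrrChar G φ → χ ≠ φ →
    ∃ (H : Subgroup G) (l : H → ℂ), IsLinearChar H l ∧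
      cdot G (ind H l) χ ≠ 0 ∧ cdot G (ind H l) φ = 0

/-- `G` is relative almost monomial with respect to the (normal) subgroup `N`. -/
def IsRelAlmostMonomial (G : Type*) [Group G] [Finite G] (N : Subgroup G) : Prop :=
  ∀ χ φ : G → ℂ, IsIrrChar G χ → IsIrrChar G φ → χ ≠ φ →
    ∃ (H : Subgroup G) (hNH : N ≤ H) (ψ : H → ℂ), IsIrrChar H ψ ∧
      IsIrrChar N (resTo hNH ψ) ∧
      cdot G (ind H ψ) χ ≠ 0 ∧ cdot G (ind H ψ) φ = 0

/-- `H` is a subnormal subgroup of `G`. -/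
def IsSubnormalSubgroup (G : Type*) [Group G] (H : Subgroup G) : Prop :=
  ∃ (n : ℕ) (c : Fin (n + 1) → Subgroup G), c 0 = H ∧ c (Fin.last n) = ⊤ ∧
    ∀ i : Fin n, ((c i.castSucc).subgroupOf (c i.succ)).Normal

/-- `G` is normally almost monomial. -/
def IsNormallyAlmostMonomial (G : Type*) [Group G] [Finite G] : Prop :=
  ∀ χ φ : G → ℂ, IsIrrChar G χ → IsIrrChar G φ → χ ≠ φ →
    ∃ (H : Subgroup G), H.Normal ∧ ∃ l : H → ℂ, IsLinearChar H l ∧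
      cdot G (ind H l) χ ≠ 0 ∧ cdot G (ind H l) φ = 0

/-- `G` is subnormally almost monomial. -/
def IsSubnormallyAlmostMonomial (G : Type*) [Group G] [Finite G] : Prop :=
  ∀ χ φ : G → ℂ, IsIrrChar G χ → IsIrrChar G φ → χ ≠ φ →
    ∃ (H : Subgroup G), IsSubnormalSubgroup G H ∧ ∃ l : H → ℂ, IsLinearChar H l ∧
      cdot G (ind H l) χ ≠ 0 ∧ cdot G (ind H l) φ = 0

/-- `G` is quasi-monomial. -/
def IsQuasiMonomial (G : Type*) [Group G] [Finite G] : Prop :=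
  ∀ χ : G → ℂ, IsIrrChar G χ → ∃ (H : Subgroup G) (l : H → ℂ) (d : ℕ),
    IsLinearChar H l ∧ 1 ≤ d ∧ ind H l = fun g => (d : ℂ) * χ g

/-- The set of irreducible characters of `G`. -/
def IrrSet (G : Type*) [Group G] [Finite G] : Set (G → ℂ) := {χ | IsIrrChar G χ}

/-- `f` belongs to the semigroup `M(G)` generated by monomial characters. -/
def InMG (G : Type*) [Group G] [Finite G] (f : G → ℂ) : Prop :=
  ∃ (k : ℕ) (H : Fin (k + 1) → Subgroup G) (l : ∀ i, (H i) → ℂ),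
    (∀ i, IsLinearChar (H i) (l i)) ∧ f = fun g => ∑ i, ind (H i) (l i) g

/-- The set of irreducible constituents of a class function `f`. -/
def Cons (G : Type*) [Group G] [Finite G] (f : G → ℂ) : Set (G → ℂ) :=
  {φ | IsIrrChar G φ ∧ cdot G φ f ≠ 0}

/-- `L_t(G)`: the number of constituent-sets of size `t` of characters in `M(G)`. -/
def Lt (G : Type*) [Group G] [Finite G] (t : ℕ) : ℕ :=
  Nat.card {S : Set (G → ℂ) // ∃ f, InMG G f ∧ Cons G f = S ∧ Nat.card S = t}

end

/-!
Inflate `χ ≠ φ` from `G ⧸ N` to `G` and take `N ≤ H` and `ψ ∈ Irr(H)` separating them. By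
Frobenius reciprocity `ψ` is a constituent of the restriction to `H` of the inflation of `χ`,
on which `N` acts trivially; hence the average over `N` of a representation affording `ψ` is a
nonzero idempotent, and `⟨ψ_N, 1_N⟩` is its rank, a positive integer. Since `ψ_N` has norm one,
`‖ψ_N - 1_N‖² = 2 - 2⟨ψ_N, 1_N⟩ ≥ 0` forces `ψ_N = 1_N`. So `ψ` is a linear character of `H`
trivial on `N`, i.e. the inflation of a linear character of `H / N`, and by Frobenius
reciprocity again that character separates `χ` and `φ`.
-/

open Function

section ClassFunctions

variable {G : Type*} [Group G]

lemma sum_dite_mem_subgroup [Fintype G] (H : Subgroup G) (F : H → ℂ) :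
    ∑ g : G, (if h : g ∈ H then F ⟨g, h⟩ else 0) = ∑ x : H, F x := by
  simp only [Finset.sum_dite, Finset.univ_eq_attach, Finset.sum_const_zero, add_zero]
  exact Fintype.sum_equiv (Equiv.subtypeEquivRight (by simp)) _ _ fun _ => rfl

lemma IsChar.apply_conj {f : G → ℂ} (hf : IsChar G f) (x g : G) : f (x * g * x⁻¹) = f g := by
  obtain ⟨n, ρ, rfl⟩ := hf
  simp only [map_mul, Matrix.GeneralLinearGroup.coe_mul]
  rw [Matrix.trace_mul_cycle, ← Matrix.GeneralLinearGroup.coe_mul, ← map_mul, inv_mul_cancel,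
    map_one, Matrix.GeneralLinearGroup.coe_one, one_mul]

lemma cdot_ind_eq_cdot_res [Finite G] (H : Subgroup G) (f : H → ℂ) {χ : G → ℂ}
    (hχ : ∀ x g : G, χ (x * g * x⁻¹) = χ g) :
    cdot G (ind H f) χ = cdot H f (res H χ) := by
  have := Fintype.ofFinite G
  have hG : (Nat.card G : ℂ) ≠ 0 := Nat.cast_ne_zero.mpr Nat.card_pos.ne'
  have inner_sum (x : G) : ∑ g : G,
      (if h : x * g * x⁻¹ ∈ H then f ⟨x * g * x⁻¹, h⟩ else 0) * starRingEnd ℂ (χ g)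
      = ∑ y : H, f y * starRingEnd ℂ (χ y) := by
    rw [← sum_dite_mem_subgroup H (fun y => f y * starRingEnd ℂ (χ y))]
    refine Fintype.sum_equiv (MulAut.conj x).toEquiv _ _ fun g => ?_
    simp only [MulEquiv.toEquiv_eq_coe, MulEquiv.coe_toEquiv, MulAut.conj_apply, hχ]
    split_ifs <;> simp
  simp only [cdot, ind, res, finsum_eq_sum_of_fintype, Finset.sum_mul,
    mul_assoc (Nat.card H : ℂ)⁻¹, ← Finset.mul_sum]
  rw [Finset.sum_comm]
  simp only [inner_sum, Finset.sum_const, Finset.card_univ, nsmul_eq_mul,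
    ← Nat.card_eq_fintype_card]
  field_simp

end ClassFunctions

section Inflation

variable {A B : Type*} [Group A] [Group B]

lemma sum_comp_of_surjective [Fintype A] [Fintype B] {φ : A →* B} (hφ : Surjective φ)
    (F : B → ℂ) : ∑ a, F (φ a) = (Nat.card φ.ker : ℂ) * ∑ b, F b := by
  have card_fiber (b : B) : (Finset.univ.filter fun a => φ a = b).card = Nat.card φ.ker := by
    rw [MonoidHom.card_fiber_eq_of_mem_range φ (hφ b) ⟨1, map_one φ⟩, Nat.card_eq_fintype_card,
      Fintype.card_subtype]
    simp only [MonoidHom.mem_ker]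
  rw [Finset.sum_comp, Finset.image_univ_of_surjective hφ, Finset.mul_sum]
  simp only [card_fiber, nsmul_eq_mul]

lemma cdot_comp_of_surjective [Finite A] [Finite B] {φ : A →* B} (hφ : Surjective φ)
    (f g : B → ℂ) : cdot A (f ∘ φ) (g ∘ φ) = cdot B f g := by
  have := Fintype.ofFinite A
  have := Fintype.ofFinite B
  have hK : (Nat.card φ.ker : ℂ) ≠ 0 := Nat.cast_ne_zero.mpr Nat.card_pos.ne'
  have hcard : (Nat.card A : ℂ) = Nat.card φ.ker * Nat.card B := by
    simpa [← Nat.card_eq_fintype_card] using sum_comp_of_surjective hφ (fun _ => (1 : ℂ))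
  simp only [cdot, finsum_eq_sum_of_fintype, comp_apply]
  rw [sum_comp_of_surjective hφ (fun b => f b * starRingEnd ℂ (g b)), hcard]
  field_simp

lemma IsIrrChar.comp [Finite A] [Finite B] {f : B → ℂ} (hf : IsIrrChar B f) {φ : A →* B}
    (hφ : Surjective φ) : IsIrrChar A (f ∘ φ) := by
  obtain ⟨⟨n, ρ, rfl⟩, hf1⟩ := hf
  exact ⟨⟨n, ρ.comp φ, rfl⟩, by rwa [cdot_comp_of_surjective hφ]⟩

end Inflation

section Averaging

variable {M K : Type*} [Group M] [Group K] {n : ℕ}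

noncomputable def repAverage [Fintype M] (ρ : M →* Matrix.GeneralLinearGroup (Fin n) ℂ) :
    Matrix (Fin n) (Fin n) ℂ :=
  (Nat.card M : ℂ)⁻¹ • ∑ m, (ρ m : Matrix (Fin n) (Fin n) ℂ)

lemma sum_smul_mul_of_mul_right_invariant [Fintype K]
    (ρ : K →* Matrix.GeneralLinearGroup (Fin n) ℂ) (w : K → ℂ) {k : K}
    (hw : ∀ x, w (x * k) = w x) :
    (∑ x, w x • (ρ x : Matrix (Fin n) (Fin n) ℂ)) * ρ k
      = ∑ x, w x • (ρ x : Matrix (Fin n) (Fin n) ℂ) := by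
  rw [Finset.sum_mul]
  refine Fintype.sum_equiv (Equiv.mulRight k) _ _ fun x => ?_
  simp [hw]

variable [Fintype M] (ρ : M →* Matrix.GeneralLinearGroup (Fin n) ℂ)

lemma repAverage_mul (m : M) : repAverage ρ * ρ m = repAverage ρ := by
  rw [repAverage, smul_mul_assoc]
  simpa using congrArg ((Nat.card M : ℂ)⁻¹ • ·)
    (sum_smul_mul_of_mul_right_invariant ρ (fun _ => 1) (k := m) fun _ => rfl)

lemma mul_repAverage {X : Matrix (Fin n) (Fin n) ℂ} (hX : ∀ m, X * ρ m = X) :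
    X * repAverage ρ = X := by
  have hM : (Nat.card M : ℂ) ≠ 0 := Nat.cast_ne_zero.mpr Nat.card_pos.ne'
  rw [repAverage, mul_smul_comm, Finset.mul_sum]
  simp only [hX, Finset.sum_const, Finset.card_univ, ← Nat.card_eq_fintype_card,
    ← Nat.cast_smul_eq_nsmul ℂ, smul_smul, inv_mul_cancel₀ hM, one_smul]

lemma isIdempotentElem_repAverage : IsIdempotentElem (repAverage ρ) :=
  mul_repAverage ρ (repAverage_mul ρ)

lemma trace_repAverage :
    (repAverage ρ).trace = cdot M (fun m => (ρ m : Matrix (Fin n) (Fin n) ℂ).trace) 1 := by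
  simp [repAverage, cdot, Matrix.trace_sum, finsum_eq_sum_of_fintype]

lemma repAverage_comp_ne_zero [Finite K] (ρ : K →* Matrix.GeneralLinearGroup (Fin n) ℂ)
    (ι : M →* K) {ξ : K → ℂ} (hξ : ∀ x m, ξ (x * ι m) = ξ x)
    (h : cdot K (fun x => (ρ x : Matrix (Fin n) (Fin n) ℂ).trace) ξ ≠ 0) :
    repAverage (ρ.comp ι) ≠ 0 := by
  have := Fintype.ofFinite K
  -- `Q` absorbs the average over `M` on the right, and its trace is a multiple of `⟨ψ, ξ⟩`.
  set Q := ∑ x, starRingEnd ℂ (ξ x) • (ρ x : Matrix (Fin n) (Fin n) ℂ)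
  have hQ : Q ≠ 0 := by
    intro hQ
    apply h
    have : cdot K (fun x => (ρ x : Matrix (Fin n) (Fin n) ℂ).trace) ξ
        = (Nat.card K : ℂ)⁻¹ * Q.trace := by
      simp [cdot, Q, Matrix.trace_sum, finsum_eq_sum_of_fintype, mul_comm]
    rw [this, hQ, Matrix.trace_zero, mul_zero]
  have hQP : Q * repAverage (ρ.comp ι) = Q :=
    mul_repAverage _ fun m => sum_smul_mul_of_mul_right_invariant ρ _ fun x => by rw [hξ]
  intro hP
  rw [hP, mul_zero] at hQP
  exact hQ hQP.symm

end Averaging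

lemma Matrix.exists_trace_eq_natCast_of_isIdempotentElem {n : ℕ}
    {P : Matrix (Fin n) (Fin n) ℂ} (hP : IsIdempotentElem P) (h0 : P ≠ 0) :
    ∃ k : ℕ, k ≠ 0 ∧ P.trace = k := by
  have he : IsIdempotentElem (Matrix.toLin' P) := hP.map Matrix.toLinAlgEquiv'
  have hproj := LinearMap.IsIdempotentElem.isProj_range _ he
  refine ⟨Module.finrank ℂ (LinearMap.range (Matrix.toLin' P)), ?_, ?_⟩
  · rw [← Nat.cast_ne_zero (R := ℂ), ← hproj.trace, Ne,
      LinearMap.IsIdempotentElem.trace_eq_zero_iff he, LinearEquiv.map_eq_zero_iff]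
    exact h0
  · rw [← Matrix.trace_toLin'_eq, hproj.trace]

lemma eq_one_of_cdot_self_eq_one {M : Type*} [Group M] [Finite M] {f : M → ℂ}
    (hf : cdot M f f = 1) {k : ℕ} (hk : k ≠ 0) (hfk : cdot M f 1 = k) : f = 1 := by
  have := Fintype.ofFinite M
  have hM : (Nat.card M : ℂ) ≠ 0 := Nat.cast_ne_zero.mpr Nat.card_pos.ne'
  simp only [cdot, finsum_eq_sum_of_fintype, Pi.one_apply, map_one, mul_one,
    inv_mul_eq_iff_eq_mul₀ hM] at hf hfk
  have hfk' : ∑ m, starRingEnd ℂ (f m) = Nat.card M * k := by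
    rw [← map_sum, hfk, map_mul, map_natCast, map_natCast]
  have hS : ((∑ m, Complex.normSq (f m - 1) : ℝ) : ℂ) = Nat.card M * (2 - 2 * k) := by
    calc ((∑ m, Complex.normSq (f m - 1) : ℝ) : ℂ)
        = ∑ m, (f m * starRingEnd ℂ (f m) - f m - starRingEnd ℂ (f m) + 1) := by
          push_cast
          refine Finset.sum_congr rfl fun m _ => ?_
          rw [← Complex.mul_conj, map_sub, map_one]
          ring
      _ = Nat.card M * (2 - 2 * k) := by
          simp only [Finset.sum_add_distrib, Finset.sum_sub_distrib, hf, hfk, hfk',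
            Finset.sum_const, Finset.card_univ, nsmul_eq_mul, ← Nat.card_eq_fintype_card]
          ring
  have hS' : ∑ m, Complex.normSq (f m - 1) = Nat.card M * (2 - 2 * k) := by exact_mod_cast hS
  have hk1 : k = 1 := by
    have hnonneg : 0 ≤ (Nat.card M : ℝ) * (2 - 2 * k) :=
      hS' ▸ Finset.sum_nonneg fun m _ => Complex.normSq_nonneg _
    have : (k : ℝ) ≤ 1 := by
      have := (mul_nonneg_iff_of_pos_left (Nat.cast_pos.mpr Nat.card_pos)).mp hnonneg
      linarith
    exact_mod_cast le_antisymm this (by exact_mod_cast Nat.one_le_iff_ne_zero.mpr hk)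
  subst hk1
  rw [Nat.cast_one, mul_one, sub_self, mul_zero,
    Finset.sum_eq_zero_iff_of_nonneg fun m _ => Complex.normSq_nonneg _] at hS'
  funext m
  exact sub_eq_zero.mp (Complex.normSq_eq_zero.mp (hS' m (Finset.mem_univ m)))

lemma IsChar.exists_monoidHom_of_apply_one {K : Type*} [Group K] {ψ : K → ℂ} (hψ : IsChar K ψ)
    (h1 : ψ 1 = 1) : ∃ μ : K →* ℂˣ, ψ = fun x => (μ x : ℂ) := by
  obtain ⟨n, ρ, rfl⟩ := hψ
  obtain rfl : n = 1 := by simpa using h1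
  exact ⟨(Units.map Matrix.detMonoidHom).comp ρ,
    funext fun x => by simp [Matrix.trace_fin_one]⟩

theorem IsChar.exists_monoidHom_of_cdot_ne_zero {K M : Type*} [Group K] [Finite K] [Group M]
    [Finite M] {ψ : K → ℂ} (hψ : IsChar K ψ) (ι : M →* K)
    (hψι : cdot M (ψ ∘ ι) (ψ ∘ ι) = 1) {ξ : K → ℂ} (hξ : ∀ x m, ξ (x * ι m) = ξ x)
    (hψξ : cdot K ψ ξ ≠ 0) :
    ∃ μ : K →* ℂˣ, ψ = (fun x => (μ x : ℂ)) ∧ ∀ m, μ (ι m) = 1 := by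
  have := Fintype.ofFinite M
  obtain ⟨n, ρ, hρ⟩ := hψ
  subst hρ
  obtain ⟨k, hk, htrace⟩ := Matrix.exists_trace_eq_natCast_of_isIdempotentElem
    (isIdempotentElem_repAverage (ρ.comp ι)) (repAverage_comp_ne_zero ρ ι hξ hψξ)
  have hψι1 : (fun x => (ρ x : Matrix (Fin n) (Fin n) ℂ).trace) ∘ ι = 1 :=
    eq_one_of_cdot_self_eq_one hψι hk (by rw [← htrace, trace_repAverage]; rfl)
  obtain ⟨μ, hμ⟩ := IsChar.exists_monoidHom_of_apply_one ⟨n, ρ, rfl⟩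
    (by simpa using congrFun hψι1 1)
  refine ⟨μ, hμ, fun m => Units.ext ?_⟩
  simpa [hμ] using congrFun hψι1 m

lemma MonoidHom.exists_eq_comp_subgroupMap {G Q R : Type*} [Group G] [Group Q] [Group R]
    (π : G →* Q) (H : Subgroup G) (μ : H →* R) (hμ : ∀ x : H, π x = 1 → μ x = 1) :
    ∃ μ' : H.map π →* R, μ = μ'.comp (π.subgroupMap H) :=
  ⟨_, (MonoidHom.liftOfRightInverse_comp _ _
    (rightInverse_surjInv (π.subgroupMap_surjective H))
    ⟨μ, fun x hx => hμ x (congrArg Subtype.val hx)⟩).symm⟩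

lemma cdot_ind_subgroupMap {G Q : Type*} [Group G] [Finite G] [Group Q] [Finite Q] (π : G →* Q)
    (H : Subgroup G) (f : H.map π → ℂ) {ξ : Q → ℂ}
    (hξ : ∀ x q, ξ (x * q * x⁻¹) = ξ q) :
    cdot G (ind H (f ∘ π.subgroupMap H)) (ξ ∘ π) = cdot Q (ind (H.map π) f) ξ := by
  rw [cdot_ind_eq_cdot_res _ _ fun x g => by simp [hξ], cdot_ind_eq_cdot_res _ _ hξ]
  exact cdot_comp_of_surjective (π.subgroupMap_surjective H) f (res _ ξ)

theorem stmt1 (G : Type*) [Group G] [Finite G] (N : Subgroup G) [N.Normal]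
    (h : IsRelAlmostMonomial G N) : IsAlmostMonomial (G ⧸ N) := by
  intro χ φ hχ hφ hne
  set π := QuotientGroup.mk' N
  have hπ : Surjective π := QuotientGroup.mk'_surjective N
  obtain ⟨H, hNH, ψ, hψ, hψN, hχψ, hφψ⟩ :=
    h (χ ∘ π) (φ ∘ π) (hχ.comp hπ) (hφ.comp hπ) (hπ.injective_comp_right.ne hne)
  obtain ⟨μ, rfl, hμN⟩ := hψ.1.exists_monoidHom_of_cdot_ne_zero (Subgroup.inclusion hNH) hψN.2
    (ξ := res H (χ ∘ π)) (fun x m => by simp [res, π])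
    (by rwa [← cdot_ind_eq_cdot_res _ _ (hχ.comp hπ).1.apply_conj])
  obtain ⟨μ', rfl⟩ := π.exists_eq_comp_subgroupMap H μ fun x hx =>
    hμN ⟨x, (QuotientGroup.eq_one_iff _).mp hx⟩
  refine ⟨H.map π, fun y => μ' y, ⟨μ', rfl⟩, ?_, ?_⟩
  · rwa [← cdot_ind_subgroupMap π H _ hχ.1.apply_conj]
  · rwa [← cdot_ind_subgroupMap π H _ hφ.1.apply_conj]
end

section
/- If a finite group G is almost monomial and N ⊴ G is a normal subgroup, then the quotient G/N is almost monomial. -/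
open scoped Classical

-- helpers

lemma fiber_card {A B : Type*} [Group A] [Group B] [Finite A]
    (p : A →* B) (hp : Function.Surjective p) (b : B) :
    Nat.card {a // p a = b} = Nat.card p.ker := by
  obtain ⟨a₀, ha₀⟩ := hp b
  refine Nat.card_congr (Equiv.symm ⟨fun x => ⟨a₀ * x.1, by simp [map_mul, ha₀, MonoidHom.mem_ker.mp x.2]⟩,
    fun a => ⟨a₀⁻¹ * a.1, by simp [map_mul, ha₀, a.2]⟩, ?_, ?_⟩)
  · intro x; ext; simp
  · intro a; ext; simp

lemma avg_comp {A B : Type*} [Group A] [Group B] [Finite A] [Finite B]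
    (p : A →* B) (hp : Function.Surjective p) (F : B → ℂ) :
    (Nat.card A : ℂ)⁻¹ * ∑ᶠ a : A, F (p a) = (Nat.card B : ℂ)⁻¹ * ∑ᶠ b : B, F b := by
  letI := Fintype.ofFinite A
  letI := Fintype.ofFinite B
  rw [finsum_eq_sum_of_fintype, finsum_eq_sum_of_fintype]
  rw [← Fintype.sum_fiberwise' p F]
  have key : ∀ b : B, ∑ _i : {a // p a = b}, F b = (Nat.card p.ker : ℂ) * F b := by
    intro b
    rw [Finset.sum_const, ← fiber_card p hp b, Nat.card_eq_fintype_card]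
    simp [nsmul_eq_mul]
  simp_rw [key]
  rw [← Finset.mul_sum]
  have hcard : (Nat.card A : ℂ) = (Nat.card B : ℂ) * (Nat.card p.ker : ℂ) := by
    rw [← Nat.cast_mul]
    congr 1
    rw [Subgroup.card_eq_card_quotient_mul_card_subgroup p.ker]
    congr 1
    exact Nat.card_congr (QuotientGroup.quotientKerEquivOfSurjective p hp).toEquiv
  have h1 : (Nat.card p.ker : ℂ) ≠ 0 := Nat.cast_ne_zero.mpr Nat.card_pos.ne'
  rw [hcard]
  set K := (Nat.card p.ker : ℂ)
  set S := ∑ b : B, F b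
  calc ((Nat.card B : ℂ) * K)⁻¹ * (K * S)
      = (Nat.card B : ℂ)⁻¹ * (K⁻¹ * K) * S := by rw [mul_inv]; ring
    _ = (Nat.card B : ℂ)⁻¹ * S := by rw [inv_mul_cancel₀ h1]; ring

lemma cdot_comp {A B : Type*} [Group A] [Group B] [Finite A] [Finite B]
    (p : A →* B) (hp : Function.Surjective p) (f h : B → ℂ) :
    cdot A (fun a => f (p a)) (fun a => h (p a)) = cdot B f h :=
  avg_comp p hp fun b => f b * (starRingEnd ℂ) (h b)

lemma IsChar.conj_eq {G : Type*} [Group G] {χ : G → ℂ} (hc : IsChar G χ) (x g : G) :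
    χ (x * g * x⁻¹) = χ g := by
  obtain ⟨n, ρ, rfl⟩ := hc
  show Matrix.trace ((ρ (x * g * x⁻¹) : Matrix (Fin n) (Fin n) ℂ)) = _
  rw [map_mul, map_mul, map_inv]
  have : ((ρ x * ρ g * (ρ x)⁻¹ : Matrix.GeneralLinearGroup (Fin n) ℂ) : Matrix (Fin n) (Fin n) ℂ)
      = (ρ x : Matrix (Fin n) (Fin n) ℂ) * (ρ g) * ((ρ x)⁻¹ : Matrix.GeneralLinearGroup (Fin n) ℂ) := by
    simp [Units.val_mul]
  rw [this, Matrix.trace_mul_comm, ← mul_assoc]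
  have h2 : (((ρ x)⁻¹ : Matrix.GeneralLinearGroup (Fin n) ℂ) : Matrix (Fin n) (Fin n) ℂ) *
      (ρ x : Matrix (Fin n) (Fin n) ℂ) = 1 := by
    rw [← Units.val_mul, inv_mul_cancel]; rfl
  rw [h2, one_mul]

lemma sum_dite_subgroup {G : Type*} [Group G] [Fintype G] (H : Subgroup G)
    (T : ∀ g : G, g ∈ H → ℂ) :
    ∑ g : G, (if hx : g ∈ H then T g hx else 0) = ∑ h : H, T h.1 h.2 := by
  rw [← Finset.sum_filter_of_ne (p := (· ∈ H)) (by intro g _ hg; by_contra hmem; exact hg (dif_neg hmem))]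
  rw [Finset.sum_subtype (p := (· ∈ H)) _ (by simp)]
  apply Finset.sum_congr rfl
  intro h _
  exact dif_pos h.2

lemma frob {G : Type*} [Group G] [Finite G] (H : Subgroup G) (f : H → ℂ) (χ : G → ℂ)
    (hχ : ∀ x g : G, χ (x * g * x⁻¹) = χ g) :
    cdot G (ind H f) χ = cdot H f (res H χ) := by
  letI := Fintype.ofFinite G
  unfold cdot ind res
  simp_rw [finsum_eq_sum_of_fintype]
  set T : ℂ := ∑ h : H, f h * (starRingEnd ℂ) (χ h) with hT
  have inner : ∀ x : G, ∑ g : G,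
      (if hh : x * g * x⁻¹ ∈ H then f ⟨x * g * x⁻¹, hh⟩ else 0) * (starRingEnd ℂ) (χ g) = T := by
    intro x
    have step1 : ∀ g : G,
        (if hh : x * g * x⁻¹ ∈ H then f ⟨x * g * x⁻¹, hh⟩ else 0) * (starRingEnd ℂ) (χ g)
        = (fun g' => if hh : g' ∈ H then f ⟨g', hh⟩ * (starRingEnd ℂ) (χ g') else 0) (x * g * x⁻¹) := by
      intro g
      simp only
      split_ifs with hh
      · rw [hχ x g]
      · exact zero_mul _
    simp_rw [step1]
    have hsum := Equiv.sum_comp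
      (⟨fun g => x * g * x⁻¹, fun g => x⁻¹ * g * x, by intro g; group, by intro g; group⟩ : G ≃ G)
      (fun g' => if hh : g' ∈ H then f ⟨g', hh⟩ * (starRingEnd ℂ) (χ g') else 0)
    simp only [Equiv.coe_fn_mk] at hsum
    rw [hsum]
    refine (sum_dite_subgroup H (fun g' hh => f ⟨g', hh⟩ * (starRingEnd ℂ) (χ g'))).trans ?_
    exact Finset.sum_congr rfl fun h _ => rfl
  have expand : ∑ g : G, ((Nat.card H : ℂ)⁻¹ *
      ∑ x : G, if hh : x * g * x⁻¹ ∈ H then f ⟨x * g * x⁻¹, hh⟩ else 0) * (starRingEnd ℂ) (χ g)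
      = (Nat.card H : ℂ)⁻¹ * ((Nat.card G : ℂ) * T) := by
    have step : ∀ g : G, ((Nat.card H : ℂ)⁻¹ *
        ∑ x : G, if hh : x * g * x⁻¹ ∈ H then f ⟨x * g * x⁻¹, hh⟩ else 0) * (starRingEnd ℂ) (χ g)
        = (Nat.card H : ℂ)⁻¹ * ∑ x : G,
          (if hh : x * g * x⁻¹ ∈ H then f ⟨x * g * x⁻¹, hh⟩ else 0) * (starRingEnd ℂ) (χ g) := by
      intro g
      rw [mul_assoc, Finset.sum_mul]
    calc ∑ g : G, ((Nat.card H : ℂ)⁻¹ *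
        ∑ x : G, if hh : x * g * x⁻¹ ∈ H then f ⟨x * g * x⁻¹, hh⟩ else 0) * (starRingEnd ℂ) (χ g)
        = ∑ g : G, (Nat.card H : ℂ)⁻¹ * ∑ x : G,
          (if hh : x * g * x⁻¹ ∈ H then f ⟨x * g * x⁻¹, hh⟩ else 0) * (starRingEnd ℂ) (χ g) :=
          Finset.sum_congr rfl fun g _ => step g
      _ = (Nat.card H : ℂ)⁻¹ * ∑ g : G, ∑ x : G,
          (if hh : x * g * x⁻¹ ∈ H then f ⟨x * g * x⁻¹, hh⟩ else 0) * (starRingEnd ℂ) (χ g) :=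
          (Finset.mul_sum _ _ _).symm
      _ = (Nat.card H : ℂ)⁻¹ * ∑ x : G, ∑ g : G,
          (if hh : x * g * x⁻¹ ∈ H then f ⟨x * g * x⁻¹, hh⟩ else 0) * (starRingEnd ℂ) (χ g) := by
          rw [Finset.sum_comm]
      _ = (Nat.card H : ℂ)⁻¹ * ∑ _x : G, T := by
          congr 1; exact Finset.sum_congr rfl fun x _ => inner x
      _ = (Nat.card H : ℂ)⁻¹ * ((Nat.card G : ℂ) * T) := by
          rw [Finset.sum_const]; simp [nsmul_eq_mul, Nat.card_eq_fintype_card]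
  rw [expand]
  have hG : (Nat.card G : ℂ) ≠ 0 := Nat.cast_ne_zero.mpr Nat.card_pos.ne'
  field_simp

lemma triv_on_ker {G : Type*} [Group G] [Finite G] (H : Subgroup G) (ρ : H →* ℂˣ) (χ : H → ℂ)
    (hS : cdot H (fun x => (ρ x : ℂ)) χ ≠ 0) (n : H) (hn : ∀ x : H, χ (n * x) = χ x) :
    ρ n = 1 := by
  letI : Fintype H := Fintype.ofFinite H
  unfold cdot at hS
  rw [finsum_eq_sum_of_fintype] at hS
  set S : ℂ := ∑ x : H, (ρ x : ℂ) * (starRingEnd ℂ) (χ x) with hSdef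
  have hS0 : S ≠ 0 := by
    intro h0
    apply hS
    rw [h0, mul_zero]
  have key : S = (ρ n : ℂ) * S := by
    have := Equiv.sum_comp (Equiv.mulLeft n) (fun x : H => (ρ x : ℂ) * (starRingEnd ℂ) (χ x))
    simp only [Equiv.coe_mulLeft] at this
    calc S = ∑ x : H, (ρ (n * x) : ℂ) * (starRingEnd ℂ) (χ (n * x)) := this.symm
      _ = ∑ x : H, (ρ n : ℂ) * ((ρ x : ℂ) * (starRingEnd ℂ) (χ x)) := by
          apply Finset.sum_congr rfl; intro x _; rw [map_mul, hn]; push_cast; ring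
      _ = (ρ n : ℂ) * S := by rw [← Finset.mul_sum]
  have : ((ρ n : ℂ) - 1) * S = 0 := by rw [sub_mul, one_mul, ← key, sub_self]
  have h1 : (ρ n : ℂ) = 1 := by
    rcases mul_eq_zero.mp this with h | h
    · linear_combination h
    · exact absurd h hS0
  ext
  exact h1

theorem stmt12 (G : Type*) [Group G] [Finite G] (N : Subgroup G) [N.Normal]
    (h : IsAlmostMonomial G) : IsAlmostMonomial (G ⧸ N) := by
  intro χ φ hχ hφ hne
  set π : G →* G ⧸ N := QuotientGroup.mk' N with hπdef
  have hπ : Function.Surjective π := QuotientGroup.mk'_surjective N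
  have lift_irr : ∀ ψ : G ⧸ N → ℂ, IsIrrChar (G ⧸ N) ψ → IsIrrChar G (fun g => ψ (π g)) := by
    rintro ψ ⟨⟨n, ρ, rfl⟩, hnorm⟩
    exact ⟨⟨n, ρ.comp π, rfl⟩, (cdot_comp π hπ _ _).trans hnorm⟩
  have hχ' := lift_irr χ hχ
  have hφ' := lift_irr φ hφ
  have hne' : (fun g => χ (π g)) ≠ fun g => φ (π g) := by
    intro hcontra
    apply hne
    funext b
    obtain ⟨a, rfl⟩ := hπ b
    exact congrFun hcontra a
  obtain ⟨H, l, ⟨ρ, rfl⟩, hind1, hind2⟩ := h _ _ hχ' hφ' hne'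
  have hχcf : ∀ x g : G ⧸ N, χ (x * g * x⁻¹) = χ g := hχ.1.conj_eq
  have hφcf : ∀ x g : G ⧸ N, φ (x * g * x⁻¹) = φ g := hφ.1.conj_eq
  have hχπcf : ∀ x g : G, (fun g => χ (π g)) (x * g * x⁻¹) = (fun g => χ (π g)) g := by
    intro x g; simp only [map_mul, map_inv]; exact hχcf _ _
  have hφπcf : ∀ x g : G, (fun g => φ (π g)) (x * g * x⁻¹) = (fun g => φ (π g)) g := by
    intro x g; simp only [map_mul, map_inv]; exact hφcf _ _
  rw [frob H _ _ hχπcf] at hind1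
  rw [frob H _ _ hφπcf] at hind2
  -- the projection to the image subgroup
  set p : H →* H.map π := π.subgroupMap H with hpdef
  have hp : Function.Surjective p := π.subgroupMap_surjective H
  have hker : p.ker ≤ ρ.ker := by
    intro n hn
    have hn' : π (n : G) = 1 := congrArg Subtype.val (MonoidHom.mem_ker.mp hn)
    have : ρ n = 1 := by
      apply triv_on_ker H ρ (res H (fun g => χ (π g))) hind1 n
      intro x
      show χ (π ((n * x : H) : G)) = χ (π (x : G))
      push_cast
      rw [map_mul, hn', one_mul]
    exact MonoidHom.mem_ker.mpr this
  set ρbar : H.map π →* ℂˣ := p.liftOfSurjective hp ⟨ρ, hker⟩ with hρbar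
  have hρbar_comp : ∀ x : H, ρbar (p x) = ρ x := fun x =>
    p.liftOfRightInverse_comp_apply _ (Function.rightInverse_surjInv hp) ⟨ρ, hker⟩ x
  have h1 : (fun x : H => (ρbar (p x) : ℂ)) = fun x : H => (ρ x : ℂ) :=
    funext fun x => congrArg _ (hρbar_comp x)
  refine ⟨H.map π, fun y => (ρbar y : ℂ), ⟨ρbar, rfl⟩, ?_, ?_⟩
  have h1 : (fun x : H => (ρbar (p x) : ℂ)) = fun x : H => (ρ x : ℂ) :=
    funext fun x => congrArg _ (hρbar_comp x)
  · rw [frob _ _ _ hχcf]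
    have := (cdot_comp p hp (fun y => (ρbar y : ℂ)) (res (H.map π) χ)).symm
    rw [h1] at this
    rw [this]
    exact hind1
  · rw [frob _ _ _ hφcf]
    have := (cdot_comp p hp (fun y => (ρbar y : ℂ)) (res (H.map π) φ)).symm
    rw [h1] at this
    rw [this]
    exact hind2
end

section
/- Every quasi-monomial finite group is almost monomial. -/
open scoped Classical

/-!
If `ind H λ = d • χ` with `d ≥ 1`, then `⟨ind H λ, χ⟩ = d ≠ 0` while `⟨ind H λ, φ⟩ = d ⟨χ, φ⟩`, so
it remains to see that distinct irreducible characters are orthogonal. Irreducibility here only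
means being a character of norm one, but the inner product of two characters is a natural number
(a dimension of intertwining maps), and `0 < ‖χ - φ‖² = 2 - 2 ⟨χ, φ⟩` then forces `⟨χ, φ⟩ = 0`.
-/

open Representation

section MatrixRepresentation

variable {G k ι : Type*} [Group G] [Field k] [Fintype ι] [DecidableEq ι]

def matrixRepresentation (ρ : G →* Matrix.GeneralLinearGroup ι k) : Representation k G (ι → k) :=
  Matrix.toLinAlgEquiv'.toAlgHom.toMonoidHom.comp ((Units.coeHom _).comp ρ)

theorem character_matrixRepresentation (ρ : G →* Matrix.GeneralLinearGroup ι k) (g : G) :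
    (matrixRepresentation ρ).character g = (ρ g : Matrix ι ι k).trace :=
  Matrix.trace_toLin'_eq _

end MatrixRepresentation

section InnerProduct

variable {G : Type*} [Group G]

theorem cdot_eq_sum [Fintype G] (f h : G → ℂ) :
    cdot G f h = (Nat.card G : ℂ)⁻¹ * ∑ g, f g * starRingEnd ℂ (h g) := by
  rw [cdot, finsum_eq_sum_of_fintype]

theorem cdot_const_mul [Finite G] (c : ℂ) (f h : G → ℂ) :
    cdot G (fun g => c * f g) h = c * cdot G f h := by
  have := Fintype.ofFinite G
  simp only [cdot_eq_sum, mul_assoc, ← Finset.mul_sum]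
  ring

theorem cdot_swap [Finite G] (f h : G → ℂ) : cdot G h f = starRingEnd ℂ (cdot G f h) := by
  have := Fintype.ofFinite G
  simp only [cdot_eq_sum, map_mul, map_inv₀, map_natCast, map_sum, Complex.conj_conj, mul_comm]

theorem cdot_sub_sub [Finite G] (f h : G → ℂ) :
    cdot G (f - h) (f - h) = cdot G f f - cdot G f h - cdot G h f + cdot G h h := by
  have := Fintype.ofFinite G
  simp only [cdot_eq_sum, Pi.sub_apply, map_sub, sub_mul, mul_sub, Finset.sum_sub_distrib]
  ring

theorem cdot_self_re_pos [Finite G] {f : G → ℂ} (hf : f ≠ 0) : 0 < (cdot G f f).re := by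
  have := Fintype.ofFinite G
  obtain ⟨g₀, hg₀⟩ := Function.ne_iff.mp hf
  have hsum : 0 < ∑ g, Complex.normSq (f g) :=
    Finset.sum_pos' (fun g _ => Complex.normSq_nonneg _)
      ⟨g₀, Finset.mem_univ _, Complex.normSq_pos.mpr hg₀⟩
  simp only [cdot_eq_sum, Complex.mul_conj, ← Complex.ofReal_natCast, ← Complex.ofReal_inv,
    ← Complex.ofReal_sum, ← Complex.ofReal_mul, Complex.ofReal_re]
  exact mul_pos (inv_pos.mpr (Nat.cast_pos.mpr Nat.card_pos)) hsum

end InnerProduct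

section Characters

variable {G : Type*} [Group G]

theorem IsChar.conj {χ : G → ℂ} (hχ : IsChar G χ) : IsChar G fun g => starRingEnd ℂ (χ g) := by
  obtain ⟨n, ρ, rfl⟩ := hχ
  refine ⟨n, (Units.map ((starRingEnd ℂ).mapMatrix).toMonoidHom).comp ρ, funext fun g => ?_⟩
  exact AddMonoidHom.map_trace (starRingEnd ℂ) (ρ g : Matrix (Fin n) (Fin n) ℂ)

theorem IsChar.exists_cdot_eq_natCast [Finite G] {χ φ : G → ℂ} (hχ : IsChar G χ)
    (hφ : IsChar G φ) : ∃ N : ℕ, cdot G χ φ = N := by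
  have := Fintype.ofFinite G
  have : Invertible (Nat.card G : ℂ) :=
    invertibleOfNonzero (Nat.cast_ne_zero.mpr (Nat.card_pos (α := G)).ne')
  obtain ⟨n, ρ, rfl⟩ := hχ
  obtain ⟨m, σ, hσ⟩ := hφ.conj
  -- `σ` affords `conj φ`, so the dual of its representation takes the value `conj (φ g)` at `g⁻¹`.
  refine ⟨Module.finrank ℂ
    (IntertwiningMap (matrixRepresentation σ).dual (matrixRepresentation ρ)), ?_⟩
  rw [← card_inv_mul_sum_char_mul_char_eq_finrank, cdot_eq_sum]
  congr 1
  refine Finset.sum_congr rfl fun g _ => ?_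
  rw [char_dual, inv_inv, character_matrixRepresentation, character_matrixRepresentation,
    congrFun hσ g]

theorem IsIrrChar.cdot_eq_zero_of_ne [Finite G] {χ φ : G → ℂ} (hχ : IsIrrChar G χ)
    (hφ : IsIrrChar G φ) (hne : χ ≠ φ) : cdot G χ φ = 0 := by
  obtain ⟨N, hN⟩ := hχ.1.exists_cdot_eq_natCast hφ.1
  have hpos := cdot_self_re_pos (sub_ne_zero.mpr hne)
  rw [cdot_sub_sub, cdot_swap χ φ, hχ.2, hφ.2, hN] at hpos
  have : N < 1 := by
    simp only [Complex.add_re, Complex.sub_re, Complex.one_re, Complex.natCast_re,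
      Complex.conj_re] at hpos
    exact_mod_cast (by linarith : (N : ℝ) < 1)
  rw [hN, Nat.lt_one_iff.mp this, Nat.cast_zero]

end Characters

theorem stmt18 (G : Type*) [Group G] [Finite G] (h : IsQuasiMonomial G) :
    IsAlmostMonomial G := by
  intro χ φ hχ hφ hne
  obtain ⟨H, l, d, hl, hd, hind⟩ := h χ hχ
  refine ⟨H, l, hl, ?_, ?_⟩
  · rw [hind, cdot_const_mul, hχ.2, mul_one]
    exact_mod_cast (by omega : d ≠ 0)
  · rw [hind, cdot_const_mul, hχ.cdot_eq_zero_of_ne hφ hne, mul_zero]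
end
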